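/- arXiv:2503.20141 — 3 statements merged into one kernel-verified Lean document; each statement's English description precedes it below -/
import Mathlib

section
/- Lemma (control of sums): Let i and j be positive integers. Then the alternating sum ∑_{r=0}^{j-1} (-1)^{r+1} · C(j-r, i) · C(j, r) equals -1 if j = i, and equals 0 if j ≠ i. Here the sum is taken over integers r from 0 to j-1, and C(p, q) denotes the binomial coefficient with the convention that C(p, q) = 0 whenever q > p (for natural number arguments this is the standard Nat.choose). -/
lemma choose_sub_swap (j r i : ℕ) :
    j.choose r * (j - r).choose i = j.choose i * (j - i).choose r := by
  rcases le_or_gt (r + i) j with h | h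
  · have h1 := Nat.choose_mul (k := r + i) (n := j) (s := r) (Nat.le_add_right r i)
    have h2 := Nat.choose_mul (k := r + i) (n := j) (s := i) (Nat.le_add_left i r)
    have hsym : (r + i).choose r = (r + i).choose i := Nat.choose_symm_add
    simp only [Nat.add_sub_cancel_left, Nat.add_sub_cancel] at h1 h2
    rw [← h1, hsym, h2]
  · have hL : j.choose r * (j - r).choose i = 0 := by
      rcases le_or_gt r j with hr | hr
      · have : j - r < i := by omega
        rw [Nat.choose_eq_zero_of_lt this, mul_zero]
      · rw [Nat.choose_eq_zero_of_lt hr, zero_mul]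
    have hR : j.choose i * (j - i).choose r = 0 := by
      rcases le_or_gt i j with hi' | hi'
      · have : j - i < r := by omega
        rw [Nat.choose_eq_zero_of_lt this, mul_zero]
      · rw [Nat.choose_eq_zero_of_lt hi', zero_mul]
    rw [hL, hR]

/-- Lemma (control of sums): for positive integers `i, j`, the alternating sum
`∑_{r=0}^{j-1} (-1)^{r+1} C(j-r, i) C(j, r)` equals `-1` if `j = i` and `0` otherwise. -/
theorem control_of_sums (i j : ℕ) (hi : 0 < i) (hj : 0 < j) :
    (∑ r ∈ Finset.range j, (-1 : ℤ) ^ (r + 1) * ((j - r).choose i : ℤ) * (j.choose r : ℤ)) =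
      if j = i then -1 else 0 := by
  have key : ∀ r ∈ Finset.range j,
      (-1 : ℤ) ^ (r + 1) * ((j - r).choose i : ℤ) * (j.choose r : ℤ) =
        -((j.choose i : ℤ) * ((-1 : ℤ) ^ r * ((j - i).choose r : ℤ))) := by
    intro r _
    have h := choose_sub_swap j r i
    have h' : (j.choose r : ℤ) * ((j - r).choose i : ℤ)
        = (j.choose i : ℤ) * ((j - i).choose r : ℤ) := by exact_mod_cast congrArg (Nat.cast : ℕ → ℤ) h
    linear_combination (-(-1:ℤ)^r) * h'
  rw [Finset.sum_congr rfl key, Finset.sum_neg_distrib, ← Finset.mul_sum]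
  by_cases hji : j = i
  · subst hji
    have hsum : (∑ r ∈ Finset.range j, (-1 : ℤ) ^ r * ((j - j).choose r : ℤ)) = 1 := by
      rw [Finset.sum_eq_single 0]
      · simp
      · intro r _ hr
        rw [Nat.sub_self, Nat.choose_eq_zero_of_lt (Nat.pos_of_ne_zero hr)]
        simp
      · intro h; exact absurd (Finset.mem_range.mpr hj) h
    rw [if_pos rfl, hsum, Nat.choose_self]
    norm_num
  · rw [if_neg hji]
    rcases lt_or_gt_of_ne (fun h => hji h.symm) with hlt | hgt
    · -- i < j
      have hsum : (∑ r ∈ Finset.range j, (-1 : ℤ) ^ r * ((j - i).choose r : ℤ)) = 0 := by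
        have hsub : Finset.range (j - i + 1) ⊆ Finset.range j := by
          apply Finset.range_subset_range.mpr; omega
        rw [← Finset.sum_subset hsub]
        · exact Int.alternating_sum_range_choose_of_ne (by omega)
        · intro r _ hr
          rw [Nat.choose_eq_zero_of_lt (by simp [Finset.mem_range] at hr ⊢; omega)]
          simp
      rw [hsum, mul_zero, neg_zero]
    · -- i > j : choose j i = 0
      rw [Nat.choose_eq_zero_of_lt hgt]
      simp
end

section
/- Proposition (Hilbert basis for hyperbolic rotational invariants): Fix a real number θ ≠ 0 and set α = cosh θ, β = sinh θ. Let f be a real polynomial in two variables such that f(αx + βy, βx + αy) = f(x, y) for all real x, y. Then there exists a real polynomial g in one variable such that f(x, y) = g(x² − y²) for all real x, y. -/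
open MvPolynomial

private lemma eval_bind₁' (g : Fin 2 → MvPolynomial (Fin 2) ℝ) (p : MvPolynomial (Fin 2) ℝ)
    (x : Fin 2 → ℝ) :
    eval x (bind₁ g p) = eval (fun i => eval x (g i)) p :=
  eval₂Hom_bind₁ (RingHom.id ℝ) x g p

private lemma coeff_bind₁_diag (c : Fin 2 → ℝ) (F : MvPolynomial (Fin 2) ℝ) (m : Fin 2 →₀ ℕ) :
    coeff m (bind₁ (fun i => C (c i) * X i) F) = (∏ i, c i ^ m i) * coeff m F := by
  induction F using MvPolynomial.induction_on' with
  | add p q hp hq => simp [map_add, hp, hq, mul_add]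
  | monomial d a =>
    have key : (bind₁ (fun i => C (c i) * X i)) (monomial d a)
        = monomial d (a * ∏ i ∈ d.support, c i ^ d i) := by
      rw [bind₁_monomial]
      have h1 : ∀ i ∈ d.support, ((C (c i) * X i : MvPolynomial (Fin 2) ℝ)) ^ d i
          = C (c i ^ d i) * X i ^ d i := by
        intro i _; rw [mul_pow, map_pow]
      rw [Finset.prod_congr rfl h1, Finset.prod_mul_distrib, ← map_prod,
        monomial_eq, Finsupp.prod, map_mul]
      ring
    rw [key, coeff_monomial, coeff_monomial]
    split_ifs with h
    · subst h
      rw [Finset.prod_subset (Finset.subset_univ d.support)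
        (fun i _ hi => by simp [Finsupp.notMem_support_iff.mp hi])]
      ring
    · ring

/-- Proposition (Hilbert basis for hyperbolic rotational invariants): if a real
polynomial `f` in two variables is invariant under the hyperbolic rotation
`(x, y) ↦ (cosh θ · x + sinh θ · y, sinh θ · x + cosh θ · y)` for some fixed `θ ≠ 0`,
then there is a one-variable real polynomial `g` with `f(x, y) = g(x² - y²)`. -/
theorem hyperbolic_invariant_hilbert_basis (θ : ℝ) (hθ : θ ≠ 0)
    (f : MvPolynomial (Fin 2) ℝ)
    (hinv : ∀ x y : ℝ,
      MvPolynomial.eval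
        ![Real.cosh θ * x + Real.sinh θ * y, Real.sinh θ * x + Real.cosh θ * y] f =
      MvPolynomial.eval ![x, y] f) :
    ∃ g : Polynomial ℝ, ∀ x y : ℝ,
      MvPolynomial.eval ![x, y] f = Polynomial.eval (x ^ 2 - y ^ 2) g := by
  set c : ℝ := Real.exp θ with hc
  set F : MvPolynomial (Fin 2) ℝ :=
    bind₁ ![C (1/2 : ℝ) * (X 0 + X 1), C (1/2 : ℝ) * (X 0 - X 1)] f with hF
  have hFf : ∀ u v : ℝ, eval ![u, v] F = eval ![(u + v)/2, (u - v)/2] f := by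
    intro u v
    rw [hF, eval_bind₁']
    have : (fun i => eval ![u, v] ((![C (1/2 : ℝ) * (X 0 + X 1), C (1/2 : ℝ) * (X 0 - X 1)] :
        Fin 2 → MvPolynomial (Fin 2) ℝ) i)) = ![(u + v)/2, (u - v)/2] := by
      funext i; fin_cases i <;> simp <;> ring
    rw [this]
  have hfF : ∀ x y : ℝ, eval ![x, y] f = eval ![x + y, x - y] F := by
    intro x y
    rw [hFf]
    have : (![(x + y + (x - y))/2, (x + y - (x - y))/2] : Fin 2 → ℝ) = ![x, y] := by
      funext i; fin_cases i <;> norm_num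
    rw [this]
  have hFinv : ∀ u v : ℝ, eval ![c * u, c⁻¹ * v] F = eval ![u, v] F := by
    intro u v
    rw [hFf, hFf]
    have h := hinv ((u + v)/2) ((u - v)/2)
    rw [← h]
    have h1 : Real.cosh θ + Real.sinh θ = c := Real.cosh_add_sinh θ
    have h2 : Real.cosh θ - Real.sinh θ = c⁻¹ := by
      rw [Real.cosh_sub_sinh, hc, ← Real.exp_neg]
    have hcosh : Real.cosh θ = (c + c⁻¹)/2 := by linarith
    have hsinh : Real.sinh θ = (c - c⁻¹)/2 := by linarith
    have hv : (![(c * u + c⁻¹ * v)/2, (c * u - c⁻¹ * v)/2] : Fin 2 → ℝ)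
        = ![Real.cosh θ * ((u + v)/2) + Real.sinh θ * ((u - v)/2),
            Real.sinh θ * ((u + v)/2) + Real.cosh θ * ((u - v)/2)] := by
      funext i
      fin_cases i <;>
        simp only [Matrix.cons_val_zero, Matrix.cons_val_one, Matrix.head_cons] <;>
        rw [hcosh, hsinh] <;> ring
    rw [hv]
  have hG : bind₁ (fun i => C (![c, c⁻¹] i) * X i) F = F := by
    apply MvPolynomial.funext
    intro x
    rw [eval_bind₁']
    have h1 : (fun i => eval x ((C (![c, c⁻¹] i) * X i : MvPolynomial (Fin 2) ℝ)))
        = ![c * x 0, c⁻¹ * x 1] := by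
      funext i; fin_cases i <;> simp
    have h2 : (![x 0, x 1] : Fin 2 → ℝ) = x := by
      funext i; fin_cases i <;> rfl
    rw [h1, hFinv, h2]
  have hdiag : ∀ m ∈ F.support, m 0 = m 1 := by
    intro m hm
    have h := coeff_bind₁_diag ![c, c⁻¹] F m
    rw [hG] at h
    have hcoeff : coeff m F ≠ 0 := by simpa using hm
    have hprod : (∏ i, (![c, c⁻¹] : Fin 2 → ℝ) i ^ m i) = 1 := by
      exact mul_right_cancel₀ hcoeff (by rw [one_mul]; exact h.symm)
    rw [Fin.prod_univ_two] at hprod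
    simp only [Matrix.cons_val_zero, Matrix.cons_val_one, Matrix.head_cons] at hprod
    have hexp : Real.exp ((m 0 : ℝ) * θ) * Real.exp (-((m 1 : ℝ) * θ)) = 1 := by
      rw [← hprod, hc]
      rw [← Real.exp_nat_mul, ← Real.exp_neg, ← Real.exp_nat_mul]
      congr 1
      ring
    rw [← Real.exp_add, Real.exp_eq_one_iff] at hexp
    have h0 : ((m 0 : ℝ) - m 1) * θ = 0 := by linarith [hexp]
    rcases mul_eq_zero.mp h0 with h' | h'
    · have : (m 0 : ℝ) = m 1 := by linarith
      exact_mod_cast this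
    · exact absurd h' hθ
  refine ⟨∑ m ∈ F.support, Polynomial.C (coeff m F) * Polynomial.X ^ (m 0), ?_⟩
  intro x y
  rw [hfF, eval_eq']
  rw [Polynomial.eval_finset_sum]
  apply Finset.sum_congr rfl
  intro m hm
  rw [Fin.prod_univ_two]
  simp only [Matrix.cons_val_zero, Matrix.cons_val_one, Matrix.head_cons,
    Polynomial.eval_mul, Polynomial.eval_C, Polynomial.eval_pow, Polynomial.eval_X]
  rw [← hdiag m hm, ← mul_pow]
  ring_nf
end

section
/- Fix a real number θ ≠ 0 and set α = cosh θ, β = sinh θ. Let n be an odd natural number and let f be a real polynomial in two variables that is homogeneous of degree n and satisfies f(αx + βy, βx + αy) = f(x, y) for all real x, y. Then f is the zero polynomial. -/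
open MvPolynomial

private lemma eval_aeval' (s : Fin 2 → MvPolynomial (Fin 2) ℝ) (p : MvPolynomial (Fin 2) ℝ)
    (x : Fin 2 → ℝ) : eval x (aeval s p) = eval (fun i => eval x (s i)) p := by
  calc eval x (aeval s p) = aeval x (bind₁ s p) := rfl
  _ = aeval (fun i => aeval x (s i)) p := aeval_bind₁ ..
  _ = eval (fun i => eval x (s i)) p := rfl

private lemma coeff_aeval_scale (c : Fin 2 → ℝ) (p : MvPolynomial (Fin 2) ℝ) (d : Fin 2 →₀ ℕ) :
    coeff d (aeval (fun i => C (c i) * X i) p) = (∏ i, c i ^ d i) * coeff d p := by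
  induction p using MvPolynomial.induction_on' with
  | add p q hp hq => rw [map_add, coeff_add, hp, hq, coeff_add, mul_add]
  | monomial d' a =>
    rw [aeval_monomial]
    simp only [mul_pow, ← C_pow]
    rw [Finsupp.prod_mul]
    have hC : (d'.prod fun i k => (C (c i ^ k) : MvPolynomial (Fin 2) ℝ))
        = C (∏ i, c i ^ d' i) := by
      rw [← Finsupp.prod_pow d' c]
      exact (map_finsuppProd (C : ℝ →+* MvPolynomial (Fin 2) ℝ) d' _).symm
    rw [hC]
    have : (algebraMap ℝ (MvPolynomial (Fin 2) ℝ)) a * (C (∏ i, c i ^ d' i) *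
        d'.prod fun i k => X i ^ k) = monomial d' ((∏ i, c i ^ d' i) * a) := by
      rw [monomial_eq, algebraMap_eq, C_mul]
      ring
    rw [this, coeff_monomial, coeff_monomial]
    split
    · next h => subst h; ring
    · ring

/-- A real polynomial in two variables that is homogeneous of odd degree `n` and invariant
under the hyperbolic rotation `(x, y) ↦ (cosh θ · x + sinh θ · y, sinh θ · x + cosh θ · y)`
for some fixed `θ ≠ 0` is the zero polynomial. -/
theorem hyperbolic_invariant_odd_degree_eq_zero (θ : ℝ) (hθ : θ ≠ 0)
    (n : ℕ) (hn : Odd n) (f : MvPolynomial (Fin 2) ℝ)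
    (hhom : MvPolynomial.IsHomogeneous f n)
    (hinv : ∀ x y : ℝ,
      MvPolynomial.eval
        ![Real.cosh θ * x + Real.sinh θ * y, Real.sinh θ * x + Real.cosh θ * y] f =
      MvPolynomial.eval ![x, y] f) :
    f = 0 := by
  set g : MvPolynomial (Fin 2) ℝ := aeval ![X 0 + X 1, X 0 - X 1] f with hg
  -- evaluation of g in terms of f
  have hgev : ∀ x : Fin 2 → ℝ, eval x g = eval ![x 0 + x 1, x 0 - x 1] f := by
    intro x
    rw [hg, eval_aeval']
    have hx : (fun i => eval x (![X 0 + X 1, X 0 - X 1] i)) = ![x 0 + x 1, x 0 - x 1] := by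
      funext i; fin_cases i <;> simp
    rw [hx]
  -- scaling invariance of g
  have key : aeval (fun i => C (![Real.exp θ, Real.exp (-θ)] i) * X i) g = g := by
    apply MvPolynomial.funext
    intro x
    rw [eval_aeval', hgev, hgev]
    have hA : eval x (C (![Real.exp θ, Real.exp (-θ)] 0) * X 0) = Real.exp θ * x 0 := by simp
    have hB : eval x (C (![Real.exp θ, Real.exp (-θ)] 1) * X 1) = Real.exp (-θ) * x 1 := by simp
    simp only [hA, hB]
    have h3 : (![Real.exp θ * x 0 + Real.exp (-θ) * x 1,
        Real.exp θ * x 0 - Real.exp (-θ) * x 1] : Fin 2 → ℝ)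
        = ![Real.cosh θ * (x 0 + x 1) + Real.sinh θ * (x 0 - x 1),
            Real.sinh θ * (x 0 + x 1) + Real.cosh θ * (x 0 - x 1)] := by
      funext i
      fin_cases i
      · show Real.exp θ * x 0 + Real.exp (-θ) * x 1
            = Real.cosh θ * (x 0 + x 1) + Real.sinh θ * (x 0 - x 1)
        rw [Real.cosh_eq, Real.sinh_eq]; ring
      · show Real.exp θ * x 0 - Real.exp (-θ) * x 1
            = Real.sinh θ * (x 0 + x 1) + Real.cosh θ * (x 0 - x 1)
        rw [Real.cosh_eq, Real.sinh_eq]; ring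
    rw [h3, hinv (x 0 + x 1) (x 0 - x 1)]
  -- g is homogeneous of degree n
  have hhomg : g.IsHomogeneous n := by
    have := hhom.aeval (![X 0 + X 1, X 0 - X 1] : Fin 2 → MvPolynomial (Fin 2) ℝ) (n := 1) (fun i => by
      fin_cases i
      · show ((X 0 + X 1 : MvPolynomial (Fin 2) ℝ)).IsHomogeneous 1
        exact (isHomogeneous_X ℝ (0 : Fin 2)).add (isHomogeneous_X ℝ (1 : Fin 2))
      · show ((X 0 - X 1 : MvPolynomial (Fin 2) ℝ)).IsHomogeneous 1
        exact (isHomogeneous_X ℝ (0 : Fin 2)).sub (isHomogeneous_X ℝ (1 : Fin 2)))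
    simpa [hg] using this
  -- all coefficients of g vanish
  have hg0 : g = 0 := by
    ext d
    rw [coeff_zero]
    by_contra hne
    have hdeg : d.degree = n := by
      by_contra hd
      exact hne (hhomg.coeff_eq_zero hd)
    have hsum : d 0 + d 1 = n := by
      have : d.degree = ∑ i : Fin 2, d i := by
        rw [Finsupp.degree]
        exact Finset.sum_subset (Finset.subset_univ _)
          (by simp +contextual [Finsupp.notMem_support_iff])
      rw [this, Fin.sum_univ_two] at hdeg
      exact hdeg
    have e := coeff_aeval_scale ![Real.exp θ, Real.exp (-θ)] g d
    rw [key, Fin.prod_univ_two] at e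
    simp only [Matrix.cons_val_zero, Matrix.cons_val_one, Matrix.head_cons] at e
    have hfac : Real.exp θ ^ d 0 * Real.exp (-θ) ^ d 1 = 1 := by
      have h0 : (Real.exp θ ^ d 0 * Real.exp (-θ) ^ d 1 - 1) * coeff d g = 0 := by
        linarith [e]
      rcases mul_eq_zero.mp h0 with h | h
      · linarith
      · exact absurd h hne
    rw [← Real.exp_nat_mul, ← Real.exp_nat_mul, ← Real.exp_add, Real.exp_eq_one_iff] at hfac
    have hd01 : (d 0 : ℝ) = d 1 := by
      have : ((d 0 : ℝ) - d 1) * θ = 0 := by linarith [hfac]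
      rcases mul_eq_zero.mp this with h | h
      · linarith
      · exact absurd h hθ
    have : d 0 = d 1 := Nat.cast_injective hd01
    exact (Nat.not_even_iff_odd.mpr hn) ⟨d 0, by omega⟩
  -- conclude f = 0
  apply MvPolynomial.funext
  intro x
  rw [map_zero]
  have hx : x = ![x 0, x 1] := by funext i; fin_cases i <;> rfl
  have := hgev ![(x 0 + x 1)/2, (x 0 - x 1)/2]
  rw [hg0, map_zero] at this
  simp only [Matrix.cons_val_zero, Matrix.cons_val_one, Matrix.head_cons] at this
  rw [hx]
  have h5 : (![(x 0 + x 1)/2 + (x 0 - x 1)/2, (x 0 + x 1)/2 - (x 0 - x 1)/2] : Fin 2 → ℝ)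
      = ![x 0, x 1] := by
    funext i
    fin_cases i
    · show (x 0 + x 1)/2 + (x 0 - x 1)/2 = x 0
      ring
    · show (x 0 + x 1)/2 - (x 0 - x 1)/2 = x 1
      ring
  rw [h5] at this
  exact this.symm
end
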